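/- arXiv:2309.16348 — 2 statements merged into one kernel-verified Lean document; each statement's English description precedes it below -/
import Mathlib

section
/- For every positive integer m and every u ∈ ℝ, ρ_m′(u) = ∫_ℝ ψ(u + x) φ_m(x) dx. -/
open MeasureTheory

/-- The regular (smoothing) sequence `ρ_m(u) = ∫ ρ(x) φ_m(x - u) dx` with
`φ_m(v) = m · φ(m · v)`. -/
noncomputable def regSeq (ρ φ : ℝ → ℝ) (m : ℕ) (u : ℝ) : ℝ :=
  ∫ x : ℝ, ρ x * ((m : ℝ) * φ ((m : ℝ) * (x - u)))

/-- At points of differentiability, a subgradient coincides with the derivative. -/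
lemma subgradient_eq_deriv {ρ ψ : ℝ → ℝ}
    (hψ : ∀ u v : ℝ, ρ u + ψ u * (v - u) ≤ ρ v) {t : ℝ}
    (hd : DifferentiableAt ℝ ρ t) : ψ t = deriv ρ t := by
  set g : ℝ → ℝ := fun v => ρ v - ρ t - ψ t * (v - t) with hg
  have hmin : IsLocalMin g t := by
    apply Filter.Eventually.of_forall
    intro v
    have := hψ t v
    simp only [hg]
    nlinarith
  have h0 : deriv g t = 0 := by
    apply hmin.deriv_eq_zero
  have h1 : HasDerivAt (fun v : ℝ => ρ v - ρ t) (deriv ρ t) t :=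
    (hd.hasDerivAt).sub_const _
  have h2 : HasDerivAt (fun v : ℝ => ψ t * (v - t)) (ψ t) t := by
    simpa using ((hasDerivAt_id t).sub_const t).const_mul (ψ t)
  have h3 : deriv g t = deriv ρ t - ψ t := (h1.sub h2).deriv
  linarith

/-- Integrability of `|x|^k * |φ x|` from polynomial decay. -/
lemma integrable_abs_pow_mul {φ : ℝ → ℝ} (hφcont : Continuous φ)
    (hφdecay : ∀ k n : ℕ, ∃ B : ℝ, ∀ x : ℝ, |x| ^ k * |iteratedDeriv n φ x| ≤ B)
    (k : ℕ) : Integrable (fun x : ℝ => |x| ^ k * |φ x|) := by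
  obtain ⟨B0, hB0⟩ := hφdecay k 0
  obtain ⟨B2, hB2⟩ := hφdecay (k + 2) 0
  simp only [iteratedDeriv_zero] at hB0 hB2
  have hmeas : AEStronglyMeasurable (fun x : ℝ => |x| ^ k * |φ x|) volume :=
    ((continuous_abs.pow k).mul hφcont.abs).aestronglyMeasurable
  have hg : Integrable (fun x : ℝ => (B0 + B2) * (1 + x ^ 2)⁻¹) :=
    integrable_inv_one_add_sq.const_mul _
  refine hg.mono' hmeas (Filter.Eventually.of_forall fun x => ?_)
  have hpos : (0 : ℝ) < 1 + x ^ 2 := by positivity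
  have hx2 : x ^ 2 * (|x| ^ k * |φ x|) = |x| ^ (k + 2) * |φ x| := by
    rw [pow_add, sq_abs]; ring
  have key : |x| ^ k * |φ x| * (1 + x ^ 2) ≤ B0 + B2 := by
    nlinarith [hB0 x, hB2 x]
  rw [Real.norm_eq_abs, abs_of_nonneg (by positivity), ← div_eq_mul_inv,
    le_div_iff₀ hpos]
  linarith [key]

theorem regSeq_deriv_eq_smoothed_subgradient
    (ρ ψ φ : ℝ → ℝ) (C : ℝ) (hC : 0 < C)
    (hρconv : ConvexOn ℝ Set.univ ρ)
    (hρlip : ∀ x y : ℝ, |ρ x - ρ y| ≤ C * |x - y|)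
    (hψ : ∀ u v : ℝ, ρ u + ψ u * (v - u) ≤ ρ v)
    (hφnonneg : ∀ v, 0 ≤ φ v)
    (hφeven : ∀ v, φ (-v) = φ v)
    (hφsmooth : ContDiff ℝ (⊤ : ℕ∞) φ)
    (hφone : ∫ v : ℝ, φ v = 1)
    (hφdecay : ∀ k n : ℕ, ∃ B : ℝ, ∀ x : ℝ, |x| ^ k * |iteratedDeriv n φ x| ≤ B)
    (m : ℕ) (hm : 0 < m) :
    ∀ u : ℝ, deriv (regSeq ρ φ m) u = ∫ x : ℝ, ψ (u + x) * ((m : ℝ) * φ ((m : ℝ) * x)) := by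
  intro u
  have hφcont : Continuous φ := hφsmooth.continuous
  have hmne : (m : ℝ) ≠ 0 := Nat.cast_ne_zero.2 hm.ne'
  have hmpos : (0 : ℝ) < m := Nat.cast_pos.2 hm
  -- Lipschitz property of ρ
  have hρLip : LipschitzWith (Real.toNNReal C) ρ := by
    apply LipschitzWith.of_dist_le_mul
    intro x y
    rw [Real.dist_eq, Real.dist_eq, Real.coe_toNNReal _ hC.le]
    exact hρlip x y
  have hρcont : Continuous ρ := hρLip.continuous
  -- the mollifier
  set g : ℝ → ℝ := fun y => (m : ℝ) * φ ((m : ℝ) * y) with hgdef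
  have hgcont : Continuous g := by
    exact continuous_const.mul (hφcont.comp (continuous_const.mul continuous_id))
  have hgnonneg : ∀ y, 0 ≤ g y := fun y => by
    exact mul_nonneg hmpos.le (hφnonneg _)
  -- integrability of φ and |x| φ x
  have hφabs : Integrable (fun x : ℝ => |φ x|) := by
    simpa using integrable_abs_pow_mul hφcont hφdecay 0
  have hφint : Integrable φ := by
    refine hφabs.congr (Filter.Eventually.of_forall fun x => ?_)
    exact abs_of_nonneg (hφnonneg x)
  have hφabs1 : Integrable (fun x : ℝ => |x| * φ x) := by
    have := integrable_abs_pow_mul hφcont hφdecay 1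
    refine this.congr (Filter.Eventually.of_forall fun x => ?_)
    simp only [pow_one, abs_of_nonneg (hφnonneg x)]
  -- integrability of g and |y| * g y
  have hgint : Integrable g := by
    exact (hφint.comp_mul_left' hmne).const_mul _
  have hgabs1 : Integrable (fun y : ℝ => |y| * g y) := by
    have h1 : Integrable (fun y : ℝ => |(m : ℝ) * y| * φ ((m : ℝ) * y)) :=
      hφabs1.comp_mul_left' hmne
    refine h1.congr (Filter.Eventually.of_forall fun y => ?_)
    simp only [hgdef]
    rw [abs_mul, abs_of_nonneg hmpos.le]
    ring
  -- a.e. differentiability via Rademacher, translated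
  have hae : ∀ᵐ t : ℝ, DifferentiableAt ℝ ρ t := hρLip.ae_differentiableAt
  have haeu : ∀ᵐ y : ℝ, DifferentiableAt ℝ ρ (u + y) :=
    (measurePreserving_add_left volume u).quasiMeasurePreserving.ae hae
  -- representation of regSeq by translation
  have hrepr : regSeq ρ φ m = fun u' : ℝ => ∫ y : ℝ, ρ (u' + y) * g y := by
    funext u'
    have : (∫ y : ℝ, ρ (u' + y) * g y)
        = ∫ x : ℝ, ρ x * ((m : ℝ) * φ ((m : ℝ) * (x - u'))) := by
      rw [← integral_sub_right_eq_self (fun y : ℝ => ρ (u' + y) * g y) u']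
      congr 1
      funext x
      simp only [hgdef]
      rw [add_sub_cancel]
    rw [regSeq, ← this]
  -- the parametric family
  set F : ℝ → ℝ → ℝ := fun x y => ρ (x + y) * g y with hFdef
  set F' : ℝ → ℝ := fun y => ψ (u + y) * g y with hF'def
  -- measurability of F x
  have hF_meas : ∀ᶠ x in nhds u, AEStronglyMeasurable (F x) volume := by
    filter_upwards with x
    exact ((hρcont.comp (continuous_const.add continuous_id)).mul hgcont).aestronglyMeasurable
  -- integrability of F u
  have hF_int : Integrable (F u) := by
    have hb : Integrable (fun y : ℝ => |ρ u| * g y + C * (|y| * g y)) :=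
      (hgint.const_mul _).add (hgabs1.const_mul _)
    refine hb.mono'
      (((hρcont.comp (continuous_const.add continuous_id)).mul hgcont).aestronglyMeasurable)
      (Filter.Eventually.of_forall fun y => ?_)
    simp only [hFdef, Real.norm_eq_abs, abs_mul, abs_of_nonneg (hgnonneg y)]
    have h1 : |ρ (u + y)| ≤ |ρ u| + C * |y| := by
      have h2 := hρlip (u + y) u
      have h3 : |ρ (u + y)| - |ρ u| ≤ |ρ (u + y) - ρ u| := by
        exact abs_sub_abs_le_abs_sub _ _
      simp only [add_sub_cancel_left] at h2
      linarith
    nlinarith [hgnonneg y, abs_nonneg (ρ (u + y))]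
  -- a.e. equality of F' with a measurable function
  have haeeq : (fun y : ℝ => deriv ρ (u + y) * g y) =ᵐ[volume] F' := by
    filter_upwards [haeu] with y hy
    simp only [hF'def]
    rw [subgradient_eq_deriv hψ hy]
  have hF'_meas : AEStronglyMeasurable F' volume := by
    have h1 : Measurable (fun y : ℝ => deriv ρ (u + y) * g y) :=
      ((measurable_deriv ρ).comp (measurable_const.add measurable_id)).mul hgcont.measurable
    exact h1.aestronglyMeasurable.congr haeeq
  -- Lipschitz bound in the parameter
  have h_lipsch : ∀ᵐ y : ℝ, LipschitzOnWith (Real.nnabs (C * g y)) (fun x => F x y)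
      (Metric.ball u 1) := by
    filter_upwards with y
    apply LipschitzOnWith.of_dist_le_mul
    intro x _ x' _
    rw [Real.dist_eq, Real.dist_eq, Real.coe_nnabs]
    simp only [hFdef]
    have h1 : F x y - F x' y = (ρ (x + y) - ρ (x' + y)) * g y := by
      simp only [hFdef]; ring
    have h2 : |F x y - F x' y| = |ρ (x + y) - ρ (x' + y)| * g y := by
      rw [h1, abs_mul, abs_of_nonneg (hgnonneg y)]
    have h3 : |ρ (x + y) - ρ (x' + y)| ≤ C * |x - x'| := by
      have := hρlip (x + y) (x' + y)
      simpa using this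
    have h4 : |C * g y| = C * g y := abs_of_nonneg (mul_nonneg hC.le (hgnonneg y))
    calc |F x y - F x' y| = |ρ (x + y) - ρ (x' + y)| * g y := h2
      _ ≤ C * |x - x'| * g y := by
          exact mul_le_mul_of_nonneg_right h3 (hgnonneg y)
      _ = |C * g y| * |x - x'| := by rw [h4]; ring
  have bound_int : Integrable (fun y : ℝ => C * g y) := hgint.const_mul _
  -- a.e. differentiability of x ↦ F x y at u with derivative F' y
  have h_diff : ∀ᵐ y : ℝ, HasDerivAt (fun x => F x y) (F' y) u := by
    filter_upwards [haeu] with y hy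
    have h1 : HasDerivAt (fun x : ℝ => ρ (x + y)) (deriv ρ (u + y)) u := by
      have := HasDerivAt.comp u (hy.hasDerivAt) ((hasDerivAt_id u).add_const y)
      simpa [Function.comp_def] using this
    have h2 := h1.mul_const (g y)
    simp only [hF'def, hFdef]
    rw [subgradient_eq_deriv hψ hy]
    exact h2
  have key := hasDerivAt_integral_of_dominated_loc_of_lip (Metric.ball_mem_nhds u one_pos) hF_meas hF_int hF'_meas
    h_lipsch bound_int h_diff
  rw [hrepr]
  have := key.2.deriv
  simp only [hFdef, hF'def] at this ⊢
  rw [this]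
end

section
/- Let c > 0 and let ρ_c be the Huber loss: ρ_c(u) = u²/2 if |u| ≤ c and ρ_c(u) = c·|u| − c²/2 if |u| > c. Then for every positive integer m with 1/m < c, at the kink points u = ±c the regular sequence satisfies the exact identities ρ_m(c) − ρ_c(c) = (1/(2m²)) · ∫_{−1}^{0} v² φ(v) dv and ρ_m(−c) − ρ_c(−c) = (1/(2m²)) · ∫_{0}^{1} v² φ(v) dv. -/
open MeasureTheory

/-- The Huber loss with parameter `c`. -/
noncomputable def huberLoss (c : ℝ) (u : ℝ) : ℝ :=
  if |u| ≤ c then u ^ 2 / 2 else c * |u| - c ^ 2 / 2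

lemma huber_continuous (c : ℝ) : Continuous (huberLoss c) := by
  unfold huberLoss
  apply Continuous.if_le (by fun_prop) (by fun_prop) continuous_abs continuous_const
  intro u hu
  rw [hu, ← sq_abs u, hu]; ring

lemma supp_Ioc (φ : ℝ → ℝ) (hcont : Continuous φ)
    (hφsupp : Function.support φ ⊆ Set.Icc (-1 : ℝ) 1) :
    Function.support φ ⊆ Set.Ioc (-1 : ℝ) 1 := by
  have h1 : φ (-1) = 0 := by
    by_contra h
    have hev := (hcont.continuousAt (x := (-1 : ℝ))).eventually_ne h
    rw [Metric.eventually_nhds_iff] at hev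
    obtain ⟨ε, hε, he⟩ := hev
    have hne : φ (-1 - ε / 2) ≠ 0 := by
      apply he
      rw [Real.dist_eq]
      rw [abs_of_nonpos (by linarith)]
      linarith
    have := (hφsupp hne).1
    linarith
  intro x hx
  obtain ⟨ha, hb⟩ := hφsupp hx
  exact ⟨ha.lt_of_ne (by rintro rfl; exact hx h1), hb⟩

lemma regSeq_eq (ρ φ : ℝ → ℝ) (hsupp : Function.support φ ⊆ Set.Ioc (-1 : ℝ) 1)
    (m : ℕ) (hm : 0 < m) (u : ℝ) :
    regSeq ρ φ m u = ∫ v in (-1 : ℝ)..1, ρ (u + v / m) * φ v := by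
  have hm0 : (m : ℝ) ≠ 0 := Nat.cast_ne_zero.mpr hm.ne'
  set g : ℝ → ℝ := fun v => ρ (u + v / m) * ((m : ℝ) * φ v) with hg
  have key : ∀ x : ℝ, ρ x * ((m : ℝ) * φ ((m : ℝ) * (x - u)))
      = g ((m : ℝ) * x - (m : ℝ) * u) := by
    intro x
    have h1 : (m : ℝ) * x - (m : ℝ) * u = (m : ℝ) * (x - u) := by ring
    have h2 : u + ((m : ℝ) * (x - u)) / m = x := by field_simp; ring
    rw [h1, hg]; simp only; rw [h2]
  have step1 : regSeq ρ φ m u = ∫ x : ℝ, g ((m : ℝ) * x - (m : ℝ) * u) := by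
    unfold regSeq; exact congrArg _ (funext key)
  have step2 : (∫ x : ℝ, g ((m : ℝ) * x - (m : ℝ) * u))
      = |(m : ℝ)⁻¹| • ∫ v : ℝ, g v := by
    rw [show (fun x : ℝ => g ((m : ℝ) * x - (m : ℝ) * u))
        = (fun x : ℝ => (fun y => g (y - (m : ℝ) * u)) ((m : ℝ) * x)) from rfl]
    rw [Measure.integral_comp_mul_left (fun y => g (y - (m : ℝ) * u)) (m : ℝ)]
    rw [integral_sub_right_eq_self g ((m : ℝ) * u)]
  have step3 : (∫ v : ℝ, g v) = (m : ℝ) * ∫ v : ℝ, ρ (u + v / m) * φ v := by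
    rw [← integral_const_mul]
    exact congrArg _ (funext fun v => by rw [hg]; ring)
  have step4 : (∫ v in (-1 : ℝ)..1, ρ (u + v / m) * φ v)
      = ∫ v : ℝ, ρ (u + v / m) * φ v := by
    apply intervalIntegral.integral_eq_integral_of_support_subset
    intro v hv
    apply hsupp
    intro h0
    exact hv (by simp [Function.mem_support] at hv ⊢; simp [h0])
  rw [step1, step2, step3, step4, smul_eq_mul, abs_of_pos (by positivity : (0:ℝ) < (m:ℝ)⁻¹)]
  field_simp

lemma integral_poly (φ : ℝ → ℝ) (hcont : Continuous φ) (a b d p q : ℝ) :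
    (∫ v in p..q, (a + b * v + d * v ^ 2) * φ v)
      = a * (∫ v in p..q, φ v) + b * (∫ v in p..q, v * φ v)
        + d * (∫ v in p..q, v ^ 2 * φ v) := by
  have i1 : IntervalIntegrable (fun v => a * φ v) volume p q :=
    (continuous_const.mul hcont).intervalIntegrable p q
  have i2 : IntervalIntegrable (fun v => b * (v * φ v)) volume p q :=
    (continuous_const.mul (continuous_id.mul hcont)).intervalIntegrable p q
  have i3 : IntervalIntegrable (fun v => d * (v ^ 2 * φ v)) volume p q :=
    (continuous_const.mul ((continuous_id.pow 2).mul hcont)).intervalIntegrable p q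
  rw [intervalIntegral.integral_congr
      (g := fun v => a * φ v + b * (v * φ v) + d * (v ^ 2 * φ v)) (fun v _ => by ring)]
  rw [intervalIntegral.integral_add (i1.add i2) i3, intervalIntegral.integral_add i1 i2,
    intervalIntegral.integral_const_mul, intervalIntegral.integral_const_mul,
    intervalIntegral.integral_const_mul]

lemma odd_cancel (φ : ℝ → ℝ) (hφeven : ∀ v, φ (-v) = φ v) :
    (∫ v in (-1 : ℝ)..0, v * φ v) = - ∫ v in (0 : ℝ)..1, v * φ v := by
  have h := intervalIntegral.integral_comp_neg (a := (0:ℝ)) (b := 1) (fun v => v * φ v)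
  simp only [neg_zero] at h
  rw [← h]
  rw [intervalIntegral.integral_congr (g := fun x => -(x * φ x))
    (fun x _ => by simp [hφeven])]
  rw [intervalIntegral.integral_neg]

theorem regSeq_huber_kink_identities
    (c : ℝ) (hc : 0 < c)
    (φ : ℝ → ℝ)
    (hφnonneg : ∀ v, 0 ≤ φ v)
    (hφeven : ∀ v, φ (-v) = φ v)
    (hφsmooth : ContDiff ℝ (⊤ : ℕ∞) φ)
    (hφsupp : Function.support φ ⊆ Set.Icc (-1 : ℝ) 1)
    (hφone : ∫ v in (-1 : ℝ)..1, φ v = 1)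
    (m : ℕ) (hm : 0 < m) (hmc : 1 / (m : ℝ) < c) :
    regSeq (huberLoss c) φ m c - huberLoss c c
        = 1 / (2 * (m : ℝ) ^ 2) * ∫ v in (-1 : ℝ)..0, v ^ 2 * φ v ∧
      regSeq (huberLoss c) φ m (-c) - huberLoss c (-c)
        = 1 / (2 * (m : ℝ) ^ 2) * ∫ v in (0 : ℝ)..1, v ^ 2 * φ v := by
  have hφcont : Continuous φ := hφsmooth.continuous
  have hsupp' := supp_Ioc φ hφcont hφsupp
  have hmR : (0 : ℝ) < (m : ℝ) := by exact_mod_cast hm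
  have hm0 : (m : ℝ) ≠ 0 := hmR.ne'
  have hhc : Continuous (huberLoss c) := huber_continuous c
  -- integrability of pieces
  have hint : ∀ u p q : ℝ, IntervalIntegrable
      (fun v => huberLoss c (u + v / m) * φ v) volume p q := fun u p q =>
    ((hhc.comp (by fun_prop)).mul hφcont).intervalIntegrable p q
  have hφint : ∀ p q : ℝ, IntervalIntegrable φ volume p q := fun p q =>
    hφcont.intervalIntegrable p q
  -- split of ∫φ
  have hsplitφ : (∫ v in (-1 : ℝ)..0, φ v) + (∫ v in (0 : ℝ)..1, φ v) = 1 := by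
    rw [intervalIntegral.integral_add_adjacent_intervals (hφint (-1) 0) (hφint 0 1)]
    exact hφone
  have hodd := odd_cancel φ hφeven
  have hhcc : huberLoss c c = c ^ 2 / 2 := by
    unfold huberLoss; rw [if_pos (by rw [abs_of_pos hc])]
  have hhcc' : huberLoss c (-c) = c ^ 2 / 2 := by
    unfold huberLoss
    rw [if_pos (by rw [abs_neg, abs_of_pos hc]), neg_pow]; ring
  constructor
  · -- at u = c
    rw [regSeq_eq (huberLoss c) φ hsupp' m hm c,
      ← intervalIntegral.integral_add_adjacent_intervals (hint c (-1) 0) (hint c 0 1)]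
    have e1 : (∫ v in (-1 : ℝ)..0, huberLoss c (c + v / m) * φ v)
        = ∫ v in (-1 : ℝ)..0, (c ^ 2 / 2 + (c / m) * v + (1 / (2 * (m:ℝ)^2)) * v ^ 2) * φ v := by
      apply intervalIntegral.integral_congr
      intro v hv
      rw [Set.uIcc_of_le (by norm_num : (-1:ℝ) ≤ 0)] at hv
      obtain ⟨hv1, hv2⟩ := hv
      have hd1 : -(1 : ℝ) / m ≤ v / m := by gcongr
      have hd2 : v / (m:ℝ) ≤ 0 := div_nonpos_of_nonpos_of_nonneg hv2 hmR.le
      have habs : |c + v / m| ≤ c := by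
        rw [abs_le]
        constructor
        · have : -(1:ℝ)/m = -(1/m) := by ring
          nlinarith [hd1]
        · linarith
      unfold huberLoss
      beta_reduce
      rw [if_pos habs]
      field_simp
      ring
    have e2 : (∫ v in (0 : ℝ)..1, huberLoss c (c + v / m) * φ v)
        = ∫ v in (0 : ℝ)..1, (c ^ 2 / 2 + (c / m) * v + 0 * v ^ 2) * φ v := by
      apply intervalIntegral.integral_congr
      intro v hv
      rw [Set.uIcc_of_le (by norm_num : (0:ℝ) ≤ 1)] at hv
      obtain ⟨hv1, hv2⟩ := hv
      rcases eq_or_lt_of_le hv1 with h0 | h0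
      · subst h0
        unfold huberLoss
        beta_reduce
        simp only [zero_div, add_zero]
        rw [if_pos (by rw [abs_of_pos hc])]
        ring
      · have hpos : 0 < v / m := div_pos h0 hmR
        unfold huberLoss
        beta_reduce
        rw [if_neg (by rw [abs_of_pos (by linarith)]; linarith), abs_of_pos (by linarith)]
        ring
    rw [e1, e2, integral_poly φ hφcont, integral_poly φ hφcont, hhcc]
    linear_combination (c ^ 2 / 2) * hsplitφ + (c / m) * hodd
  · -- at u = -c
    rw [regSeq_eq (huberLoss c) φ hsupp' m hm (-c),
      ← intervalIntegral.integral_add_adjacent_intervals (hint (-c) (-1) 0) (hint (-c) 0 1)]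
    have e1 : (∫ v in (-1 : ℝ)..0, huberLoss c (-c + v / m) * φ v)
        = ∫ v in (-1 : ℝ)..0, (c ^ 2 / 2 + (-(c / m)) * v + 0 * v ^ 2) * φ v := by
      apply intervalIntegral.integral_congr
      intro v hv
      rw [Set.uIcc_of_le (by norm_num : (-1:ℝ) ≤ 0)] at hv
      obtain ⟨hv1, hv2⟩ := hv
      rcases eq_or_lt_of_le hv2 with h0 | h0
      · subst h0
        unfold huberLoss
        beta_reduce
        simp only [zero_div, add_zero]
        rw [if_pos (by rw [abs_neg, abs_of_pos hc])]
        ring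
      · have hneg : v / m < 0 := div_neg_of_neg_of_pos h0 hmR
        unfold huberLoss
        beta_reduce
        rw [if_neg (by rw [abs_of_neg (by linarith)]; push_neg; linarith),
          abs_of_neg (by linarith)]
        ring
    have e2 : (∫ v in (0 : ℝ)..1, huberLoss c (-c + v / m) * φ v)
        = ∫ v in (0 : ℝ)..1, (c ^ 2 / 2 + (-(c / m)) * v + (1 / (2 * (m:ℝ)^2)) * v ^ 2) * φ v := by
      apply intervalIntegral.integral_congr
      intro v hv
      rw [Set.uIcc_of_le (by norm_num : (0:ℝ) ≤ 1)] at hv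
      obtain ⟨hv1, hv2⟩ := hv
      have hd1 : v / (m:ℝ) ≤ 1 / m := by gcongr
      have hd2 : 0 ≤ v / m := div_nonneg hv1 hmR.le
      have habs : |(-c) + v / m| ≤ c := by
        rw [abs_le]
        constructor
        · linarith
        · linarith
      unfold huberLoss
      beta_reduce
      rw [if_pos habs]
      field_simp
      ring
    rw [e1, e2, integral_poly φ hφcont, integral_poly φ hφcont, hhcc']
    linear_combination (c ^ 2 / 2) * hsplitφ + (-(c / m)) * hodd
end
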